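/- Let H be a real Hilbert space and v : (0, ∞) → H a strongly measurable function with ‖v(t)‖ ≤ C·t for all t > 0 (for some constant C ≥ 0) and ∫₀^∞ t^{−3/2} ‖v(t)‖ dt < ∞. For λ > 0 define u(λ) := λ · ∫₀^∞ e^{−λt} v(t) dt. Then for every δ ∈ (0, 1): ∑_{k=0}^∞ δ^{k/2} ‖u(δ^k)‖ ≤ ((3/(2e))^{3/2} + √π / (2(1 − δ))) · ∫₀^∞ t^{−3/2} ‖v(t)‖ dt. -/

import Mathlib

/-!
With `λ = δ^k`, the `k`-th term is at most `∫ (λt)^{3/2} e^{-λt} · t^{-3/2}‖v(t)‖ dt`, so it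
suffices to bound `∑_k g(δ^k t)` uniformly in `t > 0`, where `g(y) = y^{3/2} e^{-y}`.
Put `x_k = δ^k t` and `f(y) = y^{1/2} e^{-y}`, so that `(1-δ) g(x_k) = (x_k - x_{k+1}) f(x_k)`.
As `f` is log-concave, `k ↦ f(x_k)` is unimodal; away from its peak each term is dominated by
the integral of `f` over one of the disjoint intervals `[x_{k+1}, x_k]`, which add up to at most
`Γ(3/2) = √π/2`, and the peak term is at most `(1-δ) max g = (1-δ) (3/(2e))^{3/2}`.
-/

open MeasureTheory Set Real

lemma sum_mul_le_sum_mul_min_add_of_unimodal {L a : ℕ → ℝ} {n p : ℕ} (hpn : p ≤ n)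
    (hL : Antitone L) (ha : ∀ k, 0 ≤ a k)
    (hup : ∀ k < p, a k ≤ a (k + 1)) (hdown : ∀ k, p ≤ k → k < n → a (k + 1) ≤ a k) :
    ∑ k ∈ Finset.range (n + 1), L k * a k ≤
      ∑ k ∈ Finset.range n, L k * min (a k) (a (k + 1)) + L p * a p := by
  obtain ⟨r, rfl⟩ := Nat.exists_eq_add_of_le hpn
  rw [add_assoc, Finset.sum_range_add _ p (r + 1), Finset.sum_range_add _ p r,
    Finset.sum_range_succ']
  have hbefore : ∑ k ∈ Finset.range p, L k * a k ≤
      ∑ k ∈ Finset.range p, L k * min (a k) (a (k + 1)) :=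
    Finset.sum_le_sum fun k hk => by rw [min_eq_left (hup k (Finset.mem_range.1 hk))]
  -- past the peak, the term of index `p + i + 1` is charged to index `p + i`
  have hafter : ∑ i ∈ Finset.range r, L (p + (i + 1)) * a (p + (i + 1)) ≤
      ∑ i ∈ Finset.range r, L (p + i) * min (a (p + i)) (a (p + i + 1)) :=
    Finset.sum_le_sum fun i hi => by
      have hi := Finset.mem_range.1 hi
      rw [min_eq_right (hdown _ (by omega) (by omega)), ← add_assoc]
      exact mul_le_mul_of_nonneg_right (hL (by omega)) (ha _)
  simp only [add_zero]
  linarith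

lemma exists_unimodal_peak {a : ℕ → ℝ} (n : ℕ)
    (h : ∀ i j k, i ≤ j → j ≤ k → k ≤ n → min (a i) (a k) ≤ a j) :
    ∃ p ≤ n, (∀ k < p, a k ≤ a (k + 1)) ∧ ∀ k, p ≤ k → k < n → a (k + 1) ≤ a k := by
  obtain ⟨p, hp, hmax⟩ :=
    (Finset.range (n + 1)).exists_max_image a (Finset.nonempty_range_iff.2 n.succ_ne_zero)
  have hpn : p ≤ n := Nat.lt_succ_iff.1 (Finset.mem_range.1 hp)
  refine ⟨p, hpn, fun k hk => ?_, fun k hpk hkn => ?_⟩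
  · have := h k (k + 1) p k.le_succ hk hpn
    rwa [min_eq_left (hmax k (Finset.mem_range.2 (by omega)))] at this
  · have := h p k (k + 1) hpk k.le_succ hkn
    rwa [min_eq_right (hmax (k + 1) (Finset.mem_range.2 (by omega)))] at this

lemma exp_neg_mul_rpow_le {s y : ℝ} (hs : 0 < s) (hy : 0 ≤ y) :
    exp (-y) * y ^ s ≤ (s / exp 1) ^ s := by
  have hbase : exp (-(y / s)) * y ≤ s / exp 1 := by
    have hkey : y / s * exp (1 - y / s) ≤ 1 :=
      calc y / s * exp (1 - y / s) ≤ exp (y / s - 1) * exp (1 - y / s) := by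
            gcongr; linarith [add_one_le_exp (y / s - 1)]
        _ = 1 := by rw [← exp_add]; simp
    rw [exp_sub] at hkey
    rw [exp_neg, le_div_iff₀ (exp_pos 1)]
    field_simp at hkey ⊢
    linarith
  have hsplit : exp (-y) * y ^ s = (exp (-(y / s)) * y) ^ s := by
    rw [mul_rpow (exp_pos _).le hy, ← exp_mul]
    field_simp
  rw [hsplit]
  exact rpow_le_rpow (by positivity) hbase hs.le

lemma continuous_exp_neg_mul_rpow {r : ℝ} (hr : 0 ≤ r) :
    Continuous fun y : ℝ => exp (-y) * y ^ r :=
  (continuous_exp.comp continuous_neg).mul (continuous_rpow_const hr)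

lemma min_exp_neg_mul_rpow_le {r a b y : ℝ} (hr : 0 ≤ r) (ha : 0 < a) (hy : y ∈ Icc a b) :
    min (exp (-a) * a ^ r) (exp (-b) * b ^ r) ≤ exp (-y) * y ^ r := by
  have hconcave : ConcaveOn ℝ (Ioi 0) fun x => r • log x - id x :=
    (strictConcaveOn_log_Ioi.concaveOn.smul hr).sub (convexOn_id (convex_Ioi 0))
  have hexp : ∀ x, 0 < x → exp (-x) * x ^ r = exp (r • log x - id x) := fun x hx => by
    rw [rpow_def_of_pos hx, ← exp_add, smul_eq_mul, id]; ring_nf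
  have hb := ha.trans_le (hy.1.trans hy.2)
  rw [hexp a ha, hexp b hb, hexp y (ha.trans_le hy.1), ← exp_monotone.map_min]
  exact exp_le_exp.2 (hconcave.min_le_of_mem_Icc ha hb hy)

lemma mul_min_le_integral_exp_neg_mul_rpow {r a b : ℝ} (hr : 0 ≤ r) (ha : 0 < a) (hab : a ≤ b) :
    (b - a) * min (exp (-a) * a ^ r) (exp (-b) * b ^ r) ≤ ∫ y in a..b, exp (-y) * y ^ r := by
  rw [← smul_eq_mul, ← intervalIntegral.integral_const]
  exact intervalIntegral.integral_mono_on hab intervalIntegrable_const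
    ((continuous_exp_neg_mul_rpow hr).intervalIntegrable _ _)
    fun y hy => min_exp_neg_mul_rpow_le hr ha hy

lemma sum_integral_exp_neg_mul_rpow_le_Gamma {s : ℝ} (hs : 1 ≤ s) {x : ℕ → ℝ}
    (hx : Antitone x) (hx0 : ∀ k, 0 < x k) (n : ℕ) :
    ∑ k ∈ Finset.range n, ∫ y in x (k + 1)..x k, exp (-y) * y ^ (s - 1) ≤ Gamma s := by
  have hcont := continuous_exp_neg_mul_rpow (sub_nonneg.2 hs)
  have htelescope : ∑ k ∈ Finset.range n, ∫ y in x (k + 1)..x k, exp (-y) * y ^ (s - 1) =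
      ∫ y in x n..x 0, exp (-y) * y ^ (s - 1) := by
    rw [Finset.sum_congr rfl fun k _ => intervalIntegral.integral_symm (x k) (x (k + 1)),
      Finset.sum_neg_distrib, intervalIntegral.sum_integral_adjacent_intervals fun k _ => hcont.intervalIntegrable _ _,
      intervalIntegral.integral_symm, neg_neg]
  rw [htelescope, intervalIntegral.integral_of_le (hx (Nat.zero_le n)),
    Gamma_eq_integral (by linarith)]
  refine setIntegral_mono_set (GammaIntegral_convergent (by linarith)) ?_ ?_
  · exact (ae_restrict_iff' measurableSet_Ioi).2 (ae_of_all _ fun y (hy : 0 < y) => by positivity)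
  · exact LE.le.eventuallyLE fun y hy => (hx0 n).trans hy.1

theorem sum_exp_neg_mul_rpow_geom_le {s δ t : ℝ} (hs : 1 ≤ s) (hδ0 : 0 < δ) (hδ1 : δ < 1)
    (ht : 0 < t) (N : ℕ) :
    ∑ k ∈ Finset.range N, exp (-(δ ^ k * t)) * (δ ^ k * t) ^ s ≤
      (s / exp 1) ^ s + Gamma s / (1 - δ) := by
  set x : ℕ → ℝ := fun k => δ ^ k * t
  set f : ℝ → ℝ := fun y => exp (-y) * y ^ (s - 1)
  have hx0 : ∀ k, 0 < x k := fun k => by positivity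
  have hx : Antitone x := fun i j hij =>
    mul_le_mul_of_nonneg_right (pow_le_pow_of_le_one hδ0.le hδ1.le hij) ht.le
  have hgap : ∀ k, x k - x (k + 1) = (1 - δ) * x k := fun k => by simp only [x, pow_succ]; ring
  have hterm : ∀ k, exp (-x k) * x k ^ s = x k * f (x k) := fun k => by
    have hk := (hx0 k).ne'
    simp only [f, rpow_sub_one hk]
    field_simp
  have hGamma : 0 ≤ Gamma s := (Gamma_pos_of_pos (by linarith)).le
  rcases N with _ | n
  · simp only [Finset.range_zero, Finset.sum_empty]; positivity
  obtain ⟨p, hpn, hup, hdown⟩ := exists_unimodal_peak (a := f ∘ x) n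
    fun i j k hij hjk _ => min_comm (f (x i)) (f (x k)) ▸
      min_exp_neg_mul_rpow_le (sub_nonneg.2 hs) (hx0 k) ⟨hx hjk, hx hij⟩
  have hsplit := sum_mul_le_sum_mul_min_add_of_unimodal (L := fun k => (1 - δ) * x k) hpn
    (fun i j hij => mul_le_mul_of_nonneg_left (hx hij) (by linarith))
    (fun k => (mul_pos (exp_pos _) (rpow_pos_of_pos (hx0 k) _)).le) hup hdown
  have hbulk : ∑ k ∈ Finset.range n, (1 - δ) * x k * min (f (x k)) (f (x (k + 1))) ≤ Gamma s :=
    (Finset.sum_le_sum fun k _ => by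
      rw [← hgap, min_comm]
      exact mul_min_le_integral_exp_neg_mul_rpow (sub_nonneg.2 hs) (hx0 _) (hx k.le_succ)).trans
      (sum_integral_exp_neg_mul_rpow_le_Gamma hs hx hx0 n)
  have hpeak : (1 - δ) * x p * f (x p) ≤ (1 - δ) * (s / exp 1) ^ s := by
    rw [mul_assoc, ← hterm]
    exact mul_le_mul_of_nonneg_left (exp_neg_mul_rpow_le (by linarith) (hx0 p).le) (by linarith)
  have hscaled : (1 - δ) * ∑ k ∈ Finset.range (n + 1), exp (-x k) * x k ^ s ≤
      (1 - δ) * (s / exp 1) ^ s + Gamma s := by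
    rw [Finset.mul_sum, Finset.sum_congr rfl fun k _ => by rw [hterm, ← mul_assoc]]
    exact hsplit.trans (by linarith)
  have h1δ : 0 < 1 - δ := by linarith
  calc ∑ k ∈ Finset.range (n + 1), exp (-x k) * x k ^ s
      = (1 - δ) * (∑ k ∈ Finset.range (n + 1), exp (-x k) * x k ^ s) / (1 - δ) := by
        field_simp
    _ ≤ ((1 - δ) * (s / exp 1) ^ s + Gamma s) / (1 - δ) := by gcongr
    _ = (s / exp 1) ^ s + Gamma s / (1 - δ) := by field_simp

section LaplaceTransform

variable {H : Type*} [NormedAddCommGroup H] [NormedSpace ℝ H]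

lemma rpow_mul_norm_smul_laplace_le (s : ℝ) (v : ℝ → H) {l : ℝ} (hl : 0 < l) :
    l ^ (s - 1) * ‖l • ∫ t in Ioi (0 : ℝ), exp (-l * t) • v t‖ ≤
      ∫ t in Ioi (0 : ℝ), exp (-(l * t)) * (l * t) ^ s * (t ^ (-s) * ‖v t‖) := by
  have hweight : ∀ t ∈ Ioi (0 : ℝ), exp (-(l * t)) * (l * t) ^ s * (t ^ (-s) * ‖v t‖) =
      l ^ s * ‖exp (-l * t) • v t‖ := fun t (ht : 0 < t) => by
    rw [mul_rpow hl.le ht.le, rpow_neg ht.le, norm_smul, norm_of_nonneg (exp_pos _).le, neg_mul]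
    field_simp
  rw [setIntegral_congr_fun measurableSet_Ioi hweight, integral_const_mul, norm_smul,
    norm_of_nonneg hl.le, ← mul_assoc, rpow_sub_one hl.ne', div_mul_cancel₀ _ hl.ne']
  exact mul_le_mul_of_nonneg_left (norm_integral_le_integral_norm _) (by positivity)

end LaplaceTransform

lemma sum_integral_exp_neg_mul_rpow_geom_le {s δ : ℝ} (hs : 1 ≤ s) (hδ0 : 0 < δ) (hδ1 : δ < 1)
    {G : ℝ → ℝ} (hG : IntegrableOn G (Ioi 0)) (hG0 : ∀ t ∈ Ioi (0 : ℝ), 0 ≤ G t) (N : ℕ) :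
    ∑ k ∈ Finset.range N, ∫ t in Ioi (0 : ℝ), exp (-(δ ^ k * t)) * (δ ^ k * t) ^ s * G t ≤
      ((s / exp 1) ^ s + Gamma s / (1 - δ)) * ∫ t in Ioi (0 : ℝ), G t := by
  have hint : ∀ k : ℕ, IntegrableOn (fun t => exp (-(δ ^ k * t)) * (δ ^ k * t) ^ s * G t) (Ioi 0) :=
    fun k => by
      refine hG.bdd_mul (c := (s / exp 1) ^ s) ((continuous_exp_neg_mul_rpow (by linarith)).comp
        (continuous_const.mul continuous_id)).aestronglyMeasurable ?_
      refine (ae_restrict_iff' measurableSet_Ioi).2 (ae_of_all _ fun t (ht : 0 < t) => ?_)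
      rw [norm_of_nonneg (by positivity)]
      exact exp_neg_mul_rpow_le (by linarith) (by positivity)
  rw [← integral_finsetSum _ fun k _ => hint k, ← integral_const_mul]
  refine setIntegral_mono_on (integrable_finsetSum _ fun k _ => hint k) (hG.const_mul _)
    measurableSet_Ioi fun t ht => ?_
  rw [← Finset.sum_mul]
  exact mul_le_mul_of_nonneg_right (sum_exp_neg_mul_rpow_geom_le hs hδ0 hδ1 ht N) (hG0 t ht)

lemma Gamma_three_div_two : Gamma (3 / 2) = √π / 2 := by
  rw [show (3 : ℝ) / 2 = 1 / 2 + 1 by norm_num, Gamma_add_one (by norm_num), Gamma_one_half_eq]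
  ring

theorem stmt_14_general
    {H : Type*} [NormedAddCommGroup H] [InnerProductSpace ℝ H]
    (v : ℝ → H)
    (hint : IntegrableOn (fun t : ℝ => t ^ (-(3 : ℝ) / 2) * ‖v t‖) (Set.Ioi 0))
    (u : ℝ → H)
    (hu : ∀ l : ℝ, 0 < l → u l = l • ∫ t in Set.Ioi (0 : ℝ), Real.exp (-l * t) • v t) :
    ∀ δ : ℝ, δ ∈ Set.Ioo (0 : ℝ) 1 →
      Summable (fun k : ℕ => δ ^ ((k : ℝ) / 2) * ‖u (δ ^ k)‖) ∧
      ∑' k : ℕ, δ ^ ((k : ℝ) / 2) * ‖u (δ ^ k)‖ ≤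
        ((3 / (2 * Real.exp 1)) ^ ((3 : ℝ) / 2) + Real.sqrt Real.pi / (2 * (1 - δ))) *
          ∫ t in Set.Ioi (0 : ℝ), t ^ (-(3 : ℝ) / 2) * ‖v t‖ := by
  rintro δ ⟨hδ0, hδ1⟩
  have hterm : ∀ k : ℕ, δ ^ ((k : ℝ) / 2) * ‖u (δ ^ k)‖ ≤ ∫ t in Ioi (0 : ℝ),
      exp (-(δ ^ k * t)) * (δ ^ k * t) ^ ((3 : ℝ) / 2) * (t ^ (-(3 : ℝ) / 2) * ‖v t‖) := by
    intro k
    have hl : 0 < δ ^ k := pow_pos hδ0 k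
    have hpow : δ ^ ((k : ℝ) / 2) = (δ ^ k) ^ ((3 : ℝ) / 2 - 1) := by
      rw [← rpow_natCast, ← rpow_mul hδ0.le]; ring_nf
    rw [hu _ hl, hpow, neg_div]
    exact rpow_mul_norm_smul_laplace_le _ v hl
  have hpartial : ∀ N, ∑ k ∈ Finset.range N, δ ^ ((k : ℝ) / 2) * ‖u (δ ^ k)‖ ≤
      ((3 / (2 * exp 1)) ^ ((3 : ℝ) / 2) + √π / (2 * (1 - δ))) *
        ∫ t in Ioi (0 : ℝ), t ^ (-(3 : ℝ) / 2) * ‖v t‖ := fun N => by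
    rw [show (3 : ℝ) / (2 * exp 1) = 3 / 2 / exp 1 by rw [div_div],
      show √π / (2 * (1 - δ)) = Gamma (3 / 2) / (1 - δ) by rw [Gamma_three_div_two, div_div]]
    exact (Finset.sum_le_sum fun k _ => hterm k).trans
      (sum_integral_exp_neg_mul_rpow_geom_le (by norm_num) hδ0 hδ1 hint
        (fun t (ht : 0 < t) => by positivity) N)
  have hnonneg : ∀ k : ℕ, 0 ≤ δ ^ ((k : ℝ) / 2) * ‖u (δ ^ k)‖ := fun k => by positivity
  exact ⟨summable_of_sum_range_le hnonneg hpartial, tsum_le_of_sum_range_le hnonneg hpartial⟩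

theorem stmt_14
    {H : Type*} [NormedAddCommGroup H] [InnerProductSpace ℝ H] [CompleteSpace H]
    (C : ℝ) (hC : 0 ≤ C) (v : ℝ → H)
    (hmeas : AEStronglyMeasurable v (volume.restrict (Set.Ioi (0 : ℝ))))
    (hbdd : ∀ t : ℝ, 0 < t → ‖v t‖ ≤ C * t)
    (hint : IntegrableOn (fun t : ℝ => t ^ (-(3 : ℝ) / 2) * ‖v t‖) (Set.Ioi 0))
    (u : ℝ → H)
    (hu : ∀ l : ℝ, 0 < l → u l = l • ∫ t in Set.Ioi (0 : ℝ), Real.exp (-l * t) • v t) :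
    ∀ δ : ℝ, δ ∈ Set.Ioo (0 : ℝ) 1 →
      Summable (fun k : ℕ => δ ^ ((k : ℝ) / 2) * ‖u (δ ^ k)‖) ∧
      ∑' k : ℕ, δ ^ ((k : ℝ) / 2) * ‖u (δ ^ k)‖ ≤
        ((3 / (2 * Real.exp 1)) ^ ((3 : ℝ) / 2) + Real.sqrt Real.pi / (2 * (1 - δ))) *
          ∫ t in Set.Ioi (0 : ℝ), t ^ (-(3 : ℝ) / 2) * ‖v t‖ :=
  stmt_14_general v hint u hu
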